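/- Let G = (V, E) be a 3-regular finite simple graph with a fixed orientation (v_e⁻, v_e⁺) of each edge e, and consider the associated pricing instance. Let q be any pricing with q(v₀) = 0 such that q(v) ∉ {1, 2} for some v ∈ V. Then there exists a pricing q' with q'(v₀) = 0 whose profit is strictly greater than the profit of q. -/

import Mathlib

/-- A customer with bundle price `x` and budget `B` pays `x` if `x ≤ B` and `0`
otherwise (negative prices are allowed). -/
noncomputable def pay (x B : ℝ) : ℝ := if x ≤ B then x else 0

/-- The profit of the pricing instance associated with an oriented graph with
vertex items `V` (prices `qV`), edge items indexed by `E` (prices `qx`) and one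
extra item `v₀` (price `q0`): for each edge `e` there is one customer with bundle
`{v_e⁻, x_e}` and budget `2`, two customers with bundle `{v_e⁺, x_e}` and budget
`1`, and one customer with bundle `{v_e⁺, x_e}` and budget `3`; for each vertex
`v` there are ten customers with bundle `{v, v₀}` and budget `1` and ten with
budget `2`. -/
noncomputable def graphProfit {V E : Type*} [Fintype V] [Fintype E]
    (vm vp : E → V) (qV : V → ℝ) (qx : E → ℝ) (q0 : ℝ) : ℝ :=
  (∑ e : E, (pay (qV (vm e) + qx e) 2 + 2 * pay (qV (vp e) + qx e) 1 +
      pay (qV (vp e) + qx e) 3)) +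
    ∑ v : V, (10 * pay (qV v + q0) 1 + 10 * pay (qV v + q0) 2)

/-!
Fix a vertex `v` with `q(v) ∉ {1, 2}` and move its price by `σ` to `1` (if `q(v) < 1`) or to `2`
(otherwise), lowering the three incident edge items by the same `σ`. Every bundle containing `v`
keeps its price, so only the other customers of the three incident edges are affected: each edge
loses at most `3σ` when `σ ≥ 0` and at most `5` when `σ < 0`. The twenty customers of `v` gain
`20σ`, `10σ` and `20` in the three cases, which beats the edge loss `9σ`, `9σ` and `15`.
-/

open Finset

noncomputable def edgeRevenue (a b t : ℝ) : ℝ :=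
  pay (a + t) 2 + 2 * pay (b + t) 1 + pay (b + t) 3

noncomputable def vertexRevenue (p : ℝ) : ℝ :=
  10 * pay p 1 + 10 * pay p 2

lemma graphProfit_eq_sum_edgeRevenue_add_sum_vertexRevenue {V E : Type*} [Fintype V] [Fintype E]
    (vm vp : E → V) (qV : V → ℝ) (qx : E → ℝ) (q0 : ℝ) :
    graphProfit vm vp qV qx q0 =
      (∑ e : E, edgeRevenue (qV (vm e)) (qV (vp e)) (qx e)) +
        ∑ v : V, vertexRevenue (qV v + q0) := rfl

lemma pay_sub_le_pay_sub {y B σ : ℝ} (hB : 0 ≤ B) (hσ : 0 ≤ σ) :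
    pay y B - σ ≤ pay (y - σ) B := by
  unfold pay; split_ifs <;> linarith

lemma pay_sub_le_pay_sub_of_nonpos {y B σ : ℝ} (hB : 0 ≤ B) (hσ : σ ≤ 0) :
    pay y B - B ≤ pay (y - σ) B := by
  unfold pay; split_ifs <;> linarith

def IsEdgeLossBound (σ L : ℝ) : Prop :=
  ∀ a b t, edgeRevenue a b t - L ≤ edgeRevenue (a + σ) b (t - σ) ∧
    edgeRevenue a b t - L ≤ edgeRevenue a (b + σ) (t - σ)

lemma edgeRevenue_shift_tail (a b t σ : ℝ) :
    edgeRevenue (a + σ) b (t - σ) =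
      pay (a + t) 2 + 2 * pay (b + t - σ) 1 + pay (b + t - σ) 3 := by
  unfold edgeRevenue; ring_nf

lemma edgeRevenue_shift_head (a b t σ : ℝ) :
    edgeRevenue a (b + σ) (t - σ) =
      pay (a + t - σ) 2 + 2 * pay (b + t) 1 + pay (b + t) 3 := by
  unfold edgeRevenue; ring_nf

lemma isEdgeLossBound_of_nonneg {σ : ℝ} (hσ : 0 ≤ σ) : IsEdgeLossBound σ (3 * σ) := by
  intro a b t
  rw [edgeRevenue_shift_tail, edgeRevenue_shift_head]
  unfold edgeRevenue
  constructor
  · linarith [pay_sub_le_pay_sub (y := b + t) zero_le_one hσ,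
      pay_sub_le_pay_sub (y := b + t) zero_le_three hσ]
  · linarith [pay_sub_le_pay_sub (y := a + t) zero_le_two hσ]

lemma isEdgeLossBound_of_nonpos {σ : ℝ} (hσ : σ ≤ 0) : IsEdgeLossBound σ 5 := by
  intro a b t
  rw [edgeRevenue_shift_tail, edgeRevenue_shift_head]
  unfold edgeRevenue
  constructor
  · linarith [pay_sub_le_pay_sub_of_nonpos (y := b + t) zero_le_one hσ,
      pay_sub_le_pay_sub_of_nonpos (y := b + t) zero_le_three hσ]
  · linarith [pay_sub_le_pay_sub_of_nonpos (y := a + t) zero_le_two hσ]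

lemma exists_profitable_shift {p : ℝ} (h1 : p ≠ 1) (h2 : p ≠ 2) :
    ∃ σ L, IsEdgeLossBound σ L ∧ 3 * L + vertexRevenue p < vertexRevenue (p + σ) := by
  unfold vertexRevenue pay
  rcases h1.lt_or_gt with hp1 | hp1
  · refine ⟨1 - p, _, isEdgeLossBound_of_nonneg (by linarith), ?_⟩
    simp only [add_sub_cancel]
    split_ifs <;> linarith
  rcases h2.lt_or_gt with hp2 | hp2
  · refine ⟨2 - p, _, isEdgeLossBound_of_nonneg (by linarith), ?_⟩
    simp only [add_sub_cancel]
    split_ifs <;> linarith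
  · refine ⟨2 - p, _, isEdgeLossBound_of_nonpos (by linarith), ?_⟩
    simp only [add_sub_cancel]
    split_ifs <;> linarith

section Shift

variable {V E : Type*} [Fintype V] [Fintype E] [DecidableEq V]

lemma sum_vertexRevenue_update (qV : V → ℝ) (q0 : ℝ) (v : V) (p : ℝ) :
    ∑ w, vertexRevenue (Function.update qV v p w + q0) =
      ∑ w, vertexRevenue (qV w + q0) + (vertexRevenue (p + q0) - vertexRevenue (qV v + q0)) := by
  have hupd : (fun w => vertexRevenue (Function.update qV v p w + q0)) =
      Function.update (fun w => vertexRevenue (qV w + q0)) v (vertexRevenue (p + q0)) := by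
    ext w
    rcases eq_or_ne w v with rfl | hw <;> simp [*]
  rw [hupd, sum_update_of_mem (mem_univ v),
    sum_eq_add_sum_sdiff_singleton_of_mem (mem_univ v)]
  ring

lemma graphProfit_lt_of_shift (vm vp : E → V) (hne : ∀ e, vm e ≠ vp e) (qV : V → ℝ)
    (qx : E → ℝ) (q0 : ℝ) (v : V) {σ L : ℝ} {d : ℕ}
    (hdeg : #{e | vm e = v ∨ vp e = v} = d) (hL : IsEdgeLossBound σ L)
    (hgain : d * L + vertexRevenue (qV v + q0) < vertexRevenue (qV v + σ + q0)) :
    graphProfit vm vp qV qx q0 < graphProfit vm vp (Function.update qV v (qV v + σ))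
      (fun e => if vm e = v ∨ vp e = v then qx e - σ else qx e) q0 := by
  have hedge : ∀ e, edgeRevenue (qV (vm e)) (qV (vp e)) (qx e) -
      (if vm e = v ∨ vp e = v then L else 0) ≤
      edgeRevenue (Function.update qV v (qV v + σ) (vm e))
        (Function.update qV v (qV v + σ) (vp e))
        (if vm e = v ∨ vp e = v then qx e - σ else qx e) := by
    intro e
    by_cases htail : vm e = v
    · have hhead : vp e ≠ v := fun h => hne e (htail.trans h.symm)
      simpa [htail, hhead] using (hL (qV v) (qV (vp e)) (qx e)).1
    by_cases hhead : vp e = v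
    · simpa [htail, hhead] using (hL (qV (vm e)) (qV v) (qx e)).2
    · simp [htail, hhead]
  have hloss : ∑ e : E, (if vm e = v ∨ vp e = v then L else 0) = d * L := by
    rw [← sum_filter, sum_const, hdeg, nsmul_eq_mul]
  have hedges := sum_le_sum fun e (_ : e ∈ univ) => hedge e
  rw [sum_sub_distrib, hloss] at hedges
  rw [graphProfit_eq_sum_edgeRevenue_add_sum_vertexRevenue,
    graphProfit_eq_sum_edgeRevenue_add_sum_vertexRevenue, sum_vertexRevenue_update]
  linarith

end Shift

lemma SimpleGraph.ne_of_orientation {V : Type*} {G : SimpleGraph V} (vm vp : G.edgeSet → V)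
    (horient : ∀ e : G.edgeSet, (e : Sym2 V) = s(vm e, vp e)) (e : G.edgeSet) :
    vm e ≠ vp e :=
  (G.mem_edgeSet.mp (horient e ▸ e.2)).ne

lemma SimpleGraph.card_filter_orientation_eq_degree {V : Type*} [Fintype V] [DecidableEq V]
    {G : SimpleGraph V} [DecidableRel G.Adj] [Fintype G.edgeSet] (vm vp : G.edgeSet → V)
    (horient : ∀ e : G.edgeSet, (e : Sym2 V) = s(vm e, vp e)) (v : V) :
    #{e | vm e = v ∨ vp e = v} = G.degree v := by
  have hmem : ∀ e : G.edgeSet, v ∈ (e : Sym2 V) ↔ vm e = v ∨ vp e = v := fun e => by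
    rw [horient e, Sym2.mem_iff, eq_comm, @eq_comm _ v]
  rw [← G.card_incidenceFinset_eq_degree]
  refine card_nbij (fun e => e.1) (fun e he => ?_) Subtype.val_injective.injOn
    (fun x hx => ?_)
  · simpa [SimpleGraph.incidenceSet, hmem] using he
  · simp only [SimpleGraph.coe_incidenceFinset, SimpleGraph.incidenceSet] at hx
    exact ⟨⟨x, hx.1⟩, by simpa using (hmem ⟨x, hx.1⟩).1 hx.2, rfl⟩

theorem vertex_prices_one_or_two_general
    {V : Type*} [Fintype V]
    (G : SimpleGraph V) [DecidableRel G.Adj] [Fintype G.edgeSet]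
    (hreg : G.IsRegularOfDegree 3)
    (vm vp : G.edgeSet → V)
    (horient : ∀ e : G.edgeSet, (e : Sym2 V) = s(vm e, vp e))
    (qV : V → ℝ) (qx : G.edgeSet → ℝ)
    (hbad : ∃ v : V, qV v ≠ 1 ∧ qV v ≠ 2) :
    ∃ (qV' : V → ℝ) (qx' : G.edgeSet → ℝ),
      graphProfit vm vp qV qx 0 < graphProfit vm vp qV' qx' 0 := by
  classical
  obtain ⟨v, hv1, hv2⟩ := hbad
  obtain ⟨σ, L, hL, hgain⟩ := exists_profitable_shift hv1 hv2
  have hdeg := (G.card_filter_orientation_eq_degree vm vp horient v).trans (hreg v)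
  exact ⟨_, _, graphProfit_lt_of_shift vm vp (G.ne_of_orientation vm vp horient) qV qx 0 v
    hdeg hL (by simpa only [add_zero, Nat.cast_ofNat] using hgain)⟩

/-- in an optimal pricing every original vertex is priced 1 or 2.
Let `G` be a 3-regular finite simple graph with a fixed orientation
`(vm e, vp e)` of each edge.  If `q` is a pricing of the associated instance with
`q(v₀) = 0` and `q(v) ∉ {1, 2}` for some vertex `v`, then there is a pricing `q'`
with `q'(v₀) = 0` of strictly larger profit. -/
theorem vertex_prices_one_or_two
    {V : Type*} [Fintype V] [DecidableEq V]
    (G : SimpleGraph V) [DecidableRel G.Adj] [Fintype G.edgeSet]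
    (hreg : G.IsRegularOfDegree 3)
    (vm vp : G.edgeSet → V)
    (horient : ∀ e : G.edgeSet, (e : Sym2 V) = s(vm e, vp e))
    (qV : V → ℝ) (qx : G.edgeSet → ℝ)
    (hbad : ∃ v : V, qV v ≠ 1 ∧ qV v ≠ 2) :
    ∃ (qV' : V → ℝ) (qx' : G.edgeSet → ℝ),
      graphProfit vm vp qV qx 0 < graphProfit vm vp qV' qx' 0 :=
  vertex_prices_one_or_two_general G hreg vm vp horient qV qx hbad
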